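/- arXiv:1601.04189 — 5 statements merged into one kernel-verified Lean document; each statement's English description precedes it below -/
import Mathlib

section
/- The relation 'connected by an open exponential arc' is an equivalence relation on the set of strictly positive probability densities: it is reflexive, symmetric, and transitive. (For transitivity one may use Hölder's inequality.) -/
open MeasureTheory Set

/-- A strictly positive probability density with respect to `μ`. -/
def IsPosDensity {X : Type*} [MeasurableSpace X] (μ : Measure X) (p : X → ℝ) : Prop :=
  Measurable p ∧ (∀ᵐ x ∂μ, 0 < p x) ∧ ∫ x, p x ∂μ = 1

/-- `p` and `q` are connected by an open exponential arc. -/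
def ConnByOpenExpArc {X : Type*} [MeasurableSpace X] (μ : Measure X) (p q : X → ℝ) : Prop :=
  ∃ ε > (0:ℝ), ∀ t ∈ Ioo (-ε) (1 + ε),
    Integrable (fun x => p x ^ (1 - t) * q x ^ t) μ

/-!
Reflexivity and symmetry (`t ↦ 1 - t`) are immediate. For transitivity, weighted AM–GM,
`f ^ (1 - β) * g ^ β ≤ (1 - β) * f + β * g`, replaces Hölder's inequality: for `t ∈ [0, 1]` it
bounds `p ^ (1 - t) * r ^ t` by `(1 - t) * p + t * r`, and for `t` slightly below `0` it bounds
`p ^ (1 - t) * r ^ t = (p ^ (1 - s) * q ^ s) ^ (1 - β) * (q ^ (1 - u) * r ^ u) ^ β`, where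
`s, u < 0` lie on the given arcs and `β` is chosen so that the powers of `q` cancel. The range
`t > 1` follows by symmetry.
-/

section

variable {X : Type*} [MeasurableSpace X] {μ : Measure X} {p q r : X → ℝ}

lemma IsPosDensity.integrable (hp : IsPosDensity μ p) : Integrable p μ :=
  integrable_of_integral_eq_one hp.2.2

lemma IsPosDensity.nonneg (hp : IsPosDensity μ p) : 0 ≤ᵐ[μ] p :=
  hp.2.1.mono fun _ hx => hx.le

lemma MeasureTheory.Integrable.rpow_mul_rpow {f g : X → ℝ} (hf : Integrable f μ)
    (hg : Integrable g μ) (hf0 : 0 ≤ᵐ[μ] f) (hg0 : 0 ≤ᵐ[μ] g) {a b : ℝ} (ha : 0 ≤ a)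
    (hb : 0 ≤ b) (hab : a + b = 1) : Integrable (fun x => f x ^ a * g x ^ b) μ := by
  refine ((hf.const_mul a).add (hg.const_mul b)).mono'
    ((hf.aemeasurable.pow_const a).mul (hg.aemeasurable.pow_const b)).aestronglyMeasurable ?_
  filter_upwards [hf0, hg0] with x hfx hgx
  simp only [Pi.zero_apply] at hfx hgx
  rw [Real.norm_of_nonneg (by positivity)]
  exact Real.geom_mean_le_arith_mean2_weighted ha hb hfx hgx hab

lemma rpow_mul_rpow_eq_interpolate {a b c s t u β : ℝ} (ha : 0 ≤ a) (hb : 0 < b) (hc : 0 ≤ c)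
    (e₁ : (1 - s) * (1 - β) = 1 - t) (e₂ : s * (1 - β) + (1 - u) * β = 0) (e₃ : u * β = t) :
    (a ^ (1 - s) * b ^ s) ^ (1 - β) * (b ^ (1 - u) * c ^ u) ^ β = a ^ (1 - t) * c ^ t := by
  have hb_cancel : b ^ (s * (1 - β)) * b ^ ((1 - u) * β) = 1 := by
    rw [← Real.rpow_add hb, e₂, Real.rpow_zero]
  rw [Real.mul_rpow (by positivity) (by positivity), Real.mul_rpow (by positivity) (by positivity),
    ← Real.rpow_mul ha, ← Real.rpow_mul hb.le, ← Real.rpow_mul hb.le, ← Real.rpow_mul hc, e₁, e₃]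
  linear_combination (a ^ (1 - t) * c ^ t) * hb_cancel

lemma ConnByOpenExpArc.symm (h : ConnByOpenExpArc μ p q) : ConnByOpenExpArc μ q p := by
  obtain ⟨ε, hε, h⟩ := h
  refine ⟨ε, hε, fun t ⟨ht₁, ht₂⟩ => ?_⟩
  convert h (1 - t) ⟨by linarith, by linarith⟩ using 2 with x
  rw [sub_sub_cancel, mul_comm]

lemma ConnByOpenExpArc.integrable_left (h : ConnByOpenExpArc μ p q) : Integrable p μ := by
  obtain ⟨ε, hε, h⟩ := h
  simpa using h 0 ⟨by linarith, by linarith⟩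

lemma connByOpenExpArc_self (hp : Integrable p μ) (hp0 : 0 ≤ᵐ[μ] p) :
    ConnByOpenExpArc μ p p := by
  refine ⟨1, one_pos, fun t _ => hp.congr ?_⟩
  filter_upwards [hp0] with x hx
  rw [← Real.rpow_add' hx (by norm_num), sub_add_cancel, Real.rpow_one]

lemma ConnByOpenExpArc.exists_integrable_trans_of_neg (hpq : ConnByOpenExpArc μ p q)
    (hqr : ConnByOpenExpArc μ q r) (hp : 0 ≤ᵐ[μ] p) (hq : ∀ᵐ x ∂μ, 0 < q x)
    (hr : 0 ≤ᵐ[μ] r) :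
    ∃ ε > (0 : ℝ), ∀ t ∈ Ioo (-ε) 0, Integrable (fun x => p x ^ (1 - t) * r x ^ t) μ := by
  obtain ⟨ε₁, hε₁, h₁⟩ := hpq
  obtain ⟨ε₂, hε₂, h₂⟩ := hqr
  -- As `t → 0⁻`, `s = (t - β) / (1 - β)` tends to `-β / (1 - β) = -ε₁ / (2 + ε₁) > -ε₁`.
  set β := ε₁ / (2 * (1 + ε₁)) with hβ
  have hβ0 : 0 < β := by positivity
  have hβ1 : 1 - β = (2 + ε₁) / (2 * (1 + ε₁)) := by rw [hβ]; field_simp; ring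
  have hβ1_pos : 0 < 1 - β := by rw [hβ1]; positivity
  refine ⟨min (ε₁ / 2) (β * ε₂), by positivity, fun t ⟨ht₁, ht₂⟩ => ?_⟩
  have ht₁' : -(ε₁ / 2) < t := (neg_le_neg (min_le_left _ _)).trans_lt ht₁
  have ht₁'' : -(β * ε₂) < t := (neg_le_neg (min_le_right _ _)).trans_lt ht₁
  set s := (t - β) / (1 - β) with hs
  set u := t / β with hu
  have hs_mem : s ∈ Ioo (-ε₁) (1 + ε₁) := by
    constructor
    · rw [hs, lt_div_iff₀ hβ1_pos, hβ1, hβ]; field_simp; nlinarith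
    · rw [hs, div_lt_iff₀ hβ1_pos]; nlinarith
  have hu_mem : u ∈ Ioo (-ε₂) (1 + ε₂) := by
    constructor
    · rw [hu, lt_div_iff₀ hβ0]; linarith
    · rw [hu, div_lt_iff₀ hβ0]; nlinarith
  have e₁ : (1 - s) * (1 - β) = 1 - t := by rw [hs]; field_simp; ring
  have e₂ : s * (1 - β) + (1 - u) * β = 0 := by rw [hs, hu]; field_simp; ring
  have e₃ : u * β = t := by rw [hu]; field_simp
  have hpq_nonneg : 0 ≤ᵐ[μ] fun x => p x ^ (1 - s) * q x ^ s := by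
    filter_upwards [hp, hq] with x hpx hqx
    exact mul_nonneg (Real.rpow_nonneg hpx _) (Real.rpow_nonneg hqx.le _)
  have hqr_nonneg : 0 ≤ᵐ[μ] fun x => q x ^ (1 - u) * r x ^ u := by
    filter_upwards [hq, hr] with x hqx hrx
    exact mul_nonneg (Real.rpow_nonneg hqx.le _) (Real.rpow_nonneg hrx _)
  refine ((h₁ s hs_mem).rpow_mul_rpow (h₂ u hu_mem) hpq_nonneg hqr_nonneg hβ1_pos.le hβ0.le
    (sub_add_cancel 1 β)).congr ?_
  filter_upwards [hp, hq, hr] with x hpx hqx hrx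
  exact rpow_mul_rpow_eq_interpolate hpx hqx hrx e₁ e₂ e₃

lemma ConnByOpenExpArc.trans (hpq : ConnByOpenExpArc μ p q) (hqr : ConnByOpenExpArc μ q r)
    (hp : 0 ≤ᵐ[μ] p) (hq : ∀ᵐ x ∂μ, 0 < q x) (hr : 0 ≤ᵐ[μ] r) : ConnByOpenExpArc μ p r := by
  obtain ⟨δ₁, hδ₁, h_neg⟩ := hpq.exists_integrable_trans_of_neg hqr hp hq hr
  obtain ⟨δ₂, hδ₂, h_gt_one⟩ := hqr.symm.exists_integrable_trans_of_neg hpq.symm hr hq hp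
  refine ⟨min δ₁ δ₂, lt_min hδ₁ hδ₂, fun t ⟨ht₁, ht₂⟩ => ?_⟩
  rcases lt_or_ge t 0 with ht₀ | ht₀
  · exact h_neg t ⟨(neg_le_neg (min_le_left _ _)).trans_lt ht₁, ht₀⟩
  rcases le_or_gt t 1 with ht₃ | ht₃
  · exact hpq.integrable_left.rpow_mul_rpow hqr.symm.integrable_left hp hr (by linarith) ht₀
      (sub_add_cancel 1 t)
  · convert h_gt_one (1 - t) ⟨by linarith [min_le_right δ₁ δ₂], by linarith⟩ using 2 with x
    rw [sub_sub_cancel, mul_comm]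

end

theorem connByOpenExpArc_equivalence_general
    {X : Type*} [MeasurableSpace X] (μ : Measure X) :
    (∀ p : X → ℝ, IsPosDensity μ p → ConnByOpenExpArc μ p p) ∧
    (∀ p q : X → ℝ, IsPosDensity μ p → IsPosDensity μ q →
      ConnByOpenExpArc μ p q → ConnByOpenExpArc μ q p) ∧
    (∀ p q r : X → ℝ, IsPosDensity μ p → IsPosDensity μ q → IsPosDensity μ r →
      ConnByOpenExpArc μ p q → ConnByOpenExpArc μ q r → ConnByOpenExpArc μ p r) :=
  ⟨fun _ hp => connByOpenExpArc_self hp.integrable hp.nonneg,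
    fun _ _ _ _ h => h.symm,
    fun _ _ _ hp hq hr hpq hqr => hpq.trans hqr hp.nonneg hq.2.1 hr.nonneg⟩

/-- connection by open exponential arcs is an equivalence relation on the
set of strictly positive probability densities. -/
theorem connByOpenExpArc_equivalence
    {X : Type*} [MeasurableSpace X] (μ : Measure X) [SigmaFinite μ] :
    (∀ p : X → ℝ, IsPosDensity μ p → ConnByOpenExpArc μ p p) ∧
    (∀ p q : X → ℝ, IsPosDensity μ p → IsPosDensity μ q →
      ConnByOpenExpArc μ p q → ConnByOpenExpArc μ q p) ∧
    (∀ p q r : X → ℝ, IsPosDensity μ p → IsPosDensity μ q → IsPosDensity μ r →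
      ConnByOpenExpArc μ p q → ConnByOpenExpArc μ q r → ConnByOpenExpArc μ p r) :=
  connByOpenExpArc_equivalence_general μ
end

section
/- Let p, q be strictly positive probability densities on a measure space. If there exists ε > 0 such that ∫ (q/p)^{1+ε} p dμ < ∞ and ∫ (p/q)^{1+ε} q dμ < ∞, then p and q are connected by an open exponential arc, i.e., ∫ p^{1-t} q^t dμ < ∞ for all t in an open interval containing [0,1]. -/
/-!
Write `p^(1-t) q^t = (q/p)^t p = (p/q)^(1-t) q`. For `0 ≤ t ≤ 1 + ε` the first form is at most
`(1 + (q/p)^(1+ε)) p`, since `a^t ≤ 1 + a^s` for `a > 0` and `0 ≤ t ≤ s`; for `-ε ≤ t ≤ 0` the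
second form is likewise at most `(1 + (p/q)^(1+ε)) q`. Both majorants are integrable, as `p` and `q`
are, and so `p^(1-t) q^t` is integrable on the whole interval `[-ε, 1 + ε]`.
-/

open MeasureTheory Set

namespace Real

lemma rpow_le_one_add_rpow_of_le {a t s : ℝ} (ha : 0 < a) (ht : 0 ≤ t) (hts : t ≤ s) :
    a ^ t ≤ 1 + a ^ s := by
  rcases le_total a 1 with h | h
  · calc a ^ t ≤ 1 := rpow_le_one ha.le h ht
      _ ≤ 1 + a ^ s := le_add_of_nonneg_right (rpow_nonneg ha.le s)
  · calc a ^ t ≤ a ^ s := rpow_le_rpow_of_exponent_le h hts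
      _ ≤ 1 + a ^ s := le_add_of_nonneg_left zero_le_one

lemma rpow_one_sub_mul_rpow_eq_div_rpow_mul {p q : ℝ} (t : ℝ) (hp : 0 < p) (hq : 0 < q) :
    p ^ (1 - t) * q ^ t = (q / p) ^ t * p := by
  rw [div_rpow hq.le hp.le, rpow_sub hp, rpow_one]
  field_simp

lemma rpow_one_sub_mul_rpow_le_of_nonneg {p q t s : ℝ} (hp : 0 < p) (hq : 0 < q)
    (ht : 0 ≤ t) (hts : t ≤ s) :
    p ^ (1 - t) * q ^ t ≤ p + (q / p) ^ s * p := by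
  calc p ^ (1 - t) * q ^ t = (q / p) ^ t * p := rpow_one_sub_mul_rpow_eq_div_rpow_mul t hp hq
    _ ≤ (1 + (q / p) ^ s) * p :=
      mul_le_mul_of_nonneg_right (rpow_le_one_add_rpow_of_le (div_pos hq hp) ht hts) hp.le
    _ = p + (q / p) ^ s * p := by ring

lemma rpow_one_sub_mul_rpow_le {p q t ε : ℝ} (hp : 0 < p) (hq : 0 < q)
    (ht : t ∈ Icc (-ε) (1 + ε)) :
    p ^ (1 - t) * q ^ t ≤ (p + (q / p) ^ (1 + ε) * p) + (q + (p / q) ^ (1 + ε) * q) := by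
  have hqp_nonneg : 0 ≤ q + (p / q) ^ (1 + ε) * q := by positivity
  have hpq_nonneg : 0 ≤ p + (q / p) ^ (1 + ε) * p := by positivity
  rcases le_total 0 t with htn | htn
  · exact le_add_of_le_of_nonneg (rpow_one_sub_mul_rpow_le_of_nonneg hp hq htn ht.2) hqp_nonneg
  · have hswap : p ^ (1 - t) * q ^ t = q ^ (1 - (1 - t)) * p ^ (1 - t) := by
      rw [sub_sub_cancel, mul_comm]
    rw [hswap]
    exact le_add_of_nonneg_of_le hpq_nonneg
      (rpow_one_sub_mul_rpow_le_of_nonneg hq hp (by linarith) (by linarith [ht.1]))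

end Real

theorem MeasureTheory.Integrable.rpow_one_sub_mul_rpow {X : Type*} [MeasurableSpace X]
    {μ : Measure X} {p q : X → ℝ} {ε t : ℝ}
    (hp : Integrable p μ) (hq : Integrable q μ)
    (hppos : ∀ᵐ x ∂μ, 0 < p x) (hqpos : ∀ᵐ x ∂μ, 0 < q x)
    (hqp : Integrable (fun x => (q x / p x) ^ (1 + ε) * p x) μ)
    (hpq : Integrable (fun x => (p x / q x) ^ (1 + ε) * q x) μ)
    (ht : t ∈ Icc (-ε) (1 + ε)) :
    Integrable (fun x => p x ^ (1 - t) * q x ^ t) μ := by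
  refine Integrable.mono' ((hp.add hqp).add (hq.add hpq)) ?_ ?_
  · exact ((hp.aemeasurable.pow_const _).mul (hq.aemeasurable.pow_const _)).aestronglyMeasurable
  · filter_upwards [hppos, hqpos] with x hpx hqx
    rw [Real.norm_of_nonneg (by positivity)]
    exact Real.rpow_one_sub_mul_rpow_le hpx hqx ht

theorem Lp_condition_implies_open_exponential_arc_general
    {X : Type*} [MeasurableSpace X] (μ : Measure X)
    (p q : X → ℝ)
    (hppos : ∀ᵐ x ∂μ, 0 < p x) (hqpos : ∀ᵐ x ∂μ, 0 < q x)
    (hp1 : ∫ x, p x ∂μ = 1) (hq1 : ∫ x, q x ∂μ = 1)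
    (h : ∃ ε > (0:ℝ),
      Integrable (fun x => (q x / p x) ^ (1 + ε) * p x) μ ∧
      Integrable (fun x => (p x / q x) ^ (1 + ε) * q x) μ) :
    ∃ δ > (0:ℝ), ∀ t ∈ Ioo (-δ) (1 + δ),
      Integrable (fun x => p x ^ (1 - t) * q x ^ t) μ := by
  obtain ⟨ε, hε, hqp, hpq⟩ := h
  have hp : Integrable p μ := Integrable.of_integral_ne_zero (by rw [hp1]; exact one_ne_zero)
  have hq : Integrable q μ := Integrable.of_integral_ne_zero (by rw [hq1]; exact one_ne_zero)
  exact ⟨ε, hε, fun t ht =>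
    hp.rpow_one_sub_mul_rpow hq hppos hqpos hqp hpq (Ioo_subset_Icc_self ht)⟩

/-- the `L^{1+ε}` condition on the two likelihood ratios implies connection
by an open exponential arc. -/
theorem Lp_condition_implies_open_exponential_arc
    {X : Type*} [MeasurableSpace X] (μ : Measure X) [SigmaFinite μ]
    (p q : X → ℝ)
    (hpm : Measurable p) (hqm : Measurable q)
    (hppos : ∀ᵐ x ∂μ, 0 < p x) (hqpos : ∀ᵐ x ∂μ, 0 < q x)
    (hp1 : ∫ x, p x ∂μ = 1) (hq1 : ∫ x, q x ∂μ = 1)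
    (h : ∃ ε > (0:ℝ),
      Integrable (fun x => (q x / p x) ^ (1 + ε) * p x) μ ∧
      Integrable (fun x => (p x / q x) ^ (1 + ε) * q x) μ) :
    ∃ δ > (0:ℝ), ∀ t ∈ Ioo (-δ) (1 + δ),
      Integrable (fun x => p x ^ (1 - t) * q x ^ t) μ :=
  Lp_condition_implies_open_exponential_arc_general μ p q hppos hqpos hp1 hq1 h
end

section
/- Let p, q₁, q₂ be strictly positive probability densities with q₁, q₂ satisfying: there exists ε > 0 with ∫ (qᵢ/p)^{1+ε} p dμ < ∞ and ∫ (p/qᵢ)^{1+ε} qᵢ dμ < ∞ for i = 1,2. Then every convex combination q_θ = (1-θ)q₁ + θq₂, 0 < θ < 1, satisfies the same pair of conditions (with the same ε): ∫ (q_θ/p)^{1+ε} p dμ < ∞ and ∫ (p/q_θ)^{1+ε} q_θ dμ < ∞. In particular the maximal exponential family is closed under convex combinations. -/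
/-!
Both integrands are perspectives `(u, v) ↦ φ (u / v) * v` of `φ t = t ^ (1 + ε)`, evaluated at
`(q, p)` and at `(p, q)` respectively. The perspective of a convex function is jointly convex,
so at `q_θ = (1 - θ) q₁ + θ q₂` each integrand is dominated pointwise by the same convex
combination of the (integrable) integrands at `q₁` and `q₂`.
-/

open MeasureTheory Set

noncomputable def perspective (φ : ℝ → ℝ) (z : ℝ × ℝ) : ℝ := φ (z.1 / z.2) * z.2

def perspectiveDomain (s : Set ℝ) : Set (ℝ × ℝ) := {z | 0 < z.2 ∧ z.1 / z.2 ∈ s}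

theorem perspective_nonneg {φ : ℝ → ℝ} {s : Set ℝ} (hφ₀ : ∀ t ∈ s, 0 ≤ φ t) :
    ∀ z ∈ perspectiveDomain s, 0 ≤ perspective φ z :=
  fun _ hz => mul_nonneg (hφ₀ _ hz.2) hz.1.le

theorem ConvexOn.perspective {φ : ℝ → ℝ} {s : Set ℝ} (hφ : ConvexOn ℝ s φ) :
    ConvexOn ℝ (perspectiveDomain s) (perspective φ) := by
  have key : ∀ ⦃u₁ v₁ : ℝ⦄, 0 < v₁ → u₁ / v₁ ∈ s → ∀ ⦃u₂ v₂ : ℝ⦄, 0 < v₂ → u₂ / v₂ ∈ s →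
      ∀ ⦃a b : ℝ⦄, 0 ≤ a → 0 ≤ b → a + b = 1 →
      0 < a * v₁ + b * v₂ ∧ (a * u₁ + b * u₂) / (a * v₁ + b * v₂) ∈ s ∧
      φ ((a * u₁ + b * u₂) / (a * v₁ + b * v₂)) * (a * v₁ + b * v₂) ≤
        a * (φ (u₁ / v₁) * v₁) + b * (φ (u₂ / v₂) * v₂) := by
    intro u₁ v₁ hv₁ hs₁ u₂ v₂ hv₂ hs₂ a b ha hb hab
    set v := a * v₁ + b * v₂
    have hv : 0 < v := by simpa using convex_Ioi (0 : ℝ) hv₁ hv₂ ha hb hab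
    have hα : 0 ≤ a * v₁ / v := by positivity
    have hβ : 0 ≤ b * v₂ / v := by positivity
    have hαβ : a * v₁ / v + b * v₂ / v = 1 := by rw [← add_div, div_self hv.ne']
    -- the ratio of a convex combination is a convex combination of the ratios
    have hratio : (a * u₁ + b * u₂) / v = a * v₁ / v * (u₁ / v₁) + b * v₂ / v * (u₂ / v₂) := by
      field_simp
    rw [hratio]
    refine ⟨hv, hφ.1 hs₁ hs₂ hα hβ hαβ, ?_⟩
    calc _ ≤ (a * v₁ / v * φ (u₁ / v₁) + b * v₂ / v * φ (u₂ / v₂)) * v :=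
          mul_le_mul_of_nonneg_right (hφ.2 hs₁ hs₂ hα hβ hαβ) hv.le
      _ = a * (φ (u₁ / v₁) * v₁) + b * (φ (u₂ / v₂) * v₂) := by field_simp
  constructor <;> rintro ⟨u₁, v₁⟩ ⟨hv₁, hs₁⟩ ⟨u₂, v₂⟩ ⟨hv₂, hs₂⟩ a b ha hb hab <;>
    obtain ⟨hv, hs, hle⟩ := key hv₁ hs₁ hv₂ hs₂ ha hb hab
  · exact ⟨hv, hs⟩
  · exact hle

theorem ConvexOn.integrable_comp_smul_add_smul {X E : Type*} [MeasurableSpace X]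
    {μ : Measure X} [AddCommGroup E] [Module ℝ E] {φ : E → ℝ} {s : Set E}
    (hφ : ConvexOn ℝ s φ) (hφ₀ : ∀ z ∈ s, 0 ≤ φ z) {g₁ g₂ : X → E}
    (hg₁ : ∀ᵐ x ∂μ, g₁ x ∈ s) (hg₂ : ∀ᵐ x ∂μ, g₂ x ∈ s)
    (h₁ : Integrable (fun x => φ (g₁ x)) μ) (h₂ : Integrable (fun x => φ (g₂ x)) μ) {a b : ℝ}
    (hm : AEStronglyMeasurable (fun x => φ (a • g₁ x + b • g₂ x)) μ)
    (ha : 0 ≤ a) (hb : 0 ≤ b) (hab : a + b = 1) :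
    Integrable (fun x => φ (a • g₁ x + b • g₂ x)) μ := by
  refine ((h₁.const_mul a).add (h₂.const_mul b)).mono' hm ?_
  filter_upwards [hg₁, hg₂] with x hx₁ hx₂
  rw [Real.norm_of_nonneg (hφ₀ _ (hφ.1 hx₁ hx₂ ha hb hab))]
  exact hφ.2 hx₁ hx₂ ha hb hab

theorem maximal_exponential_family_convex_general
    {X : Type*} [MeasurableSpace X] (μ : Measure X)
    (p q₁ q₂ : X → ℝ)
    (hpm : Measurable p) (hq1m : Measurable q₁) (hq2m : Measurable q₂)
    (hppos : ∀ᵐ x ∂μ, 0 < p x) (hq1pos : ∀ᵐ x ∂μ, 0 < q₁ x) (hq2pos : ∀ᵐ x ∂μ, 0 < q₂ x)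
    (ε : ℝ) (hε : 0 < ε)
    (h1a : Integrable (fun x => (q₁ x / p x) ^ (1 + ε) * p x) μ)
    (h1b : Integrable (fun x => (p x / q₁ x) ^ (1 + ε) * q₁ x) μ)
    (h2a : Integrable (fun x => (q₂ x / p x) ^ (1 + ε) * p x) μ)
    (h2b : Integrable (fun x => (p x / q₂ x) ^ (1 + ε) * q₂ x) μ)
    (θ : ℝ) (hθ : θ ∈ Ioo (0:ℝ) 1) :
    Integrable
        (fun x => (((1 - θ) * q₁ x + θ * q₂ x) / p x) ^ (1 + ε) * p x) μ ∧
    Integrable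
        (fun x => (p x / ((1 - θ) * q₁ x + θ * q₂ x)) ^ (1 + ε) *
          ((1 - θ) * q₁ x + θ * q₂ x)) μ := by
  have hφ := (convexOn_rpow (by linarith : (1 : ℝ) ≤ 1 + ε)).perspective
  have hφ₀ := perspective_nonneg (s := Ici 0) fun t ht => Real.rpow_nonneg ht (1 + ε)
  have hmem : ∀ {u v : X → ℝ}, (∀ᵐ x ∂μ, 0 < u x) → (∀ᵐ x ∂μ, 0 < v x) →
      ∀ᵐ x ∂μ, (u x, v x) ∈ perspectiveDomain (Ici 0) := fun hu hv => by
    filter_upwards [hu, hv] with x hux hvx using ⟨hvx, (div_pos hux hvx).le⟩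
  have hp_comb : ∀ x, (1 - θ) * p x + θ * p x = p x := fun x => by ring
  have h1θ : 0 ≤ 1 - θ := sub_nonneg.2 hθ.2.le
  constructor
  · have h := hφ.integrable_comp_smul_add_smul hφ₀ (hmem hq1pos hppos) (hmem hq2pos hppos)
      h1a h2a (by unfold perspective; fun_prop) h1θ hθ.1.le (sub_add_cancel 1 θ)
    simpa only [perspective, Prod.smul_mk, Prod.mk_add_mk, smul_eq_mul, hp_comb] using h
  · have h := hφ.integrable_comp_smul_add_smul hφ₀ (hmem hppos hq1pos) (hmem hppos hq2pos)
      h1b h2b (by unfold perspective; fun_prop) h1θ hθ.1.le (sub_add_cancel 1 θ)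
    simpa only [perspective, Prod.smul_mk, Prod.mk_add_mk, smul_eq_mul, hp_comb] using h

/-- the `L^{1+ε}` characterization of membership in the maximal exponential
family at `p` is stable under convex combinations. -/
theorem maximal_exponential_family_convex
    {X : Type*} [MeasurableSpace X] (μ : Measure X) [SigmaFinite μ]
    (p q₁ q₂ : X → ℝ)
    (hpm : Measurable p) (hq1m : Measurable q₁) (hq2m : Measurable q₂)
    (hppos : ∀ᵐ x ∂μ, 0 < p x) (hq1pos : ∀ᵐ x ∂μ, 0 < q₁ x) (hq2pos : ∀ᵐ x ∂μ, 0 < q₂ x)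
    (hp1 : ∫ x, p x ∂μ = 1) (hq11 : ∫ x, q₁ x ∂μ = 1) (hq21 : ∫ x, q₂ x ∂μ = 1)
    (ε : ℝ) (hε : 0 < ε)
    (h1a : Integrable (fun x => (q₁ x / p x) ^ (1 + ε) * p x) μ)
    (h1b : Integrable (fun x => (p x / q₁ x) ^ (1 + ε) * q₁ x) μ)
    (h2a : Integrable (fun x => (q₂ x / p x) ^ (1 + ε) * p x) μ)
    (h2b : Integrable (fun x => (p x / q₂ x) ^ (1 + ε) * q₂ x) μ)
    (θ : ℝ) (hθ : θ ∈ Ioo (0:ℝ) 1) :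
    Integrable
        (fun x => (((1 - θ) * q₁ x + θ * q₂ x) / p x) ^ (1 + ε) * p x) μ ∧
    Integrable
        (fun x => (p x / ((1 - θ) * q₁ x + θ * q₂ x)) ^ (1 + ε) *
          ((1 - θ) * q₁ x + θ * q₂ x)) μ :=
  maximal_exponential_family_convex_general μ p q₁ q₂ hpm hq1m hq2m hppos hq1pos hq2pos ε hε h1a h1b
    h2a h2b θ hθ
end

section
/- Let EF(c) be an exponential family with densities p̄ = exp(uᵀ(c − E_p[c]) − K_p) · p relative to a member p, and let q be a density with E_q[c] = E_p[c] and finite entropy. Then KL(q‖p) ≤ KL(q‖p̄) for every p̄ ∈ EF(c); i.e., p is the reverse information projection of q onto EF(c). Moreover KL(q‖p̄) − KL(q‖p) = K_p(U¹) ≥ 0 where p̄ = e^{U¹ − K_p(U¹)}·p, with equality iff U¹ = 0 (q-a.e. constant). -/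
/-!
The tilted density `p̄ = e^{U - K} p` satisfies `log (q / p̄) = log (q / p) - U + K` pointwise,
so integrating against `q` gives `KL(q‖p̄) - KL(q‖p) = K - E_q[U] = K`, since `U` is a combination
of statistics centred at their `p`-means and `q` has the same means. The gap
`K = log E_p[e^U]` is nonnegative because `e^U ≥ 1 + U` and `E_p[U] = 0`; it vanishes exactly
when `e^U - 1 - U`, a nonnegative function vanishing only at `U = 0`, has zero `p`-integral.
-/

open MeasureTheory Real

lemma centered_sum_mul_eq {X ι : Type*} [Fintype ι] (c : ι → X → ℝ) (m u : ι → ℝ) (f : X → ℝ)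
    (x : X) :
    (∑ j, u j * (c j x - m j)) * f x = ∑ j, (u j * (c j x * f x) - u j * m j * f x) := by
  rw [Finset.sum_mul]
  exact Finset.sum_congr rfl fun j _ => by ring

lemma exp_sub_one_sub_nonneg (t : ℝ) : 0 ≤ exp t - 1 - t := by
  linarith [add_one_le_exp t]

lemma exp_sub_one_sub_eq_zero_iff {t : ℝ} : exp t - 1 - t = 0 ↔ t = 0 := by
  refine ⟨fun h => ?_, fun h => by simp [h]⟩
  by_contra hne
  linarith [add_one_lt_exp hne]

section Tilting

variable {X : Type*} [MeasurableSpace X] {μ : Measure X}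

section CenteredStatistics

variable {ι : Type*} [Fintype ι] {f : X → ℝ} {c : ι → X → ℝ} (m u : ι → ℝ)
variable (hf : Integrable f μ) (hc : ∀ j, Integrable (fun x => c j x * f x) μ)
include hf hc

lemma integrable_centered_sum_mul :
    Integrable (fun x => (∑ j, u j * (c j x - m j)) * f x) μ := by
  simp_rw [centered_sum_mul_eq c m u f]
  exact integrable_finsetSum _ fun j _ => ((hc j).const_mul _).sub (hf.const_mul _)

lemma integral_centered_sum_mul_eq_zero (hf1 : ∫ x, f x ∂μ = 1)
    (hm : ∀ j, ∫ x, c j x * f x ∂μ = m j) :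
    ∫ x, (∑ j, u j * (c j x - m j)) * f x ∂μ = 0 := by
  have hterm (j : ι) : Integrable (fun x => u j * (c j x * f x) - u j * m j * f x) μ :=
    ((hc j).const_mul _).sub (hf.const_mul _)
  simp_rw [centered_sum_mul_eq c m u f]
  rw [integral_finsetSum _ fun j _ => hterm j]
  refine Finset.sum_eq_zero fun j _ => ?_
  rw [integral_sub ((hc j).const_mul _) (hf.const_mul _), integral_const_mul,
    integral_const_mul, hf1, hm j]
  ring

end CenteredStatistics

section CumulantGenerating

variable {p U : X → ℝ} (hp1 : ∫ x, p x ∂μ = 1) (hUp : Integrable (fun x => U x * p x) μ)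
  (hUp0 : ∫ x, U x * p x ∂μ = 0)
include hp1 hUp hUp0

lemma integral_exp_sub_one_sub_mul_eq (hexp : Integrable (fun x => exp (U x) * p x) μ) :
    ∫ x, (exp (U x) - 1 - U x) * p x ∂μ = ∫ x, exp (U x) * p x ∂μ - 1 := by
  have hp := integrable_of_integral_eq_one hp1
  have hexp_sub : Integrable (fun x => exp (U x) * p x - p x) μ := hexp.sub hp
  simp_rw [sub_mul, one_mul]
  rw [integral_sub hexp_sub hUp, integral_sub hexp hp, hp1, hUp0, sub_zero]

lemma one_le_integral_exp_mul (hp0 : ∀ᵐ x ∂μ, 0 ≤ p x)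
    (hexp : Integrable (fun x => exp (U x) * p x) μ) :
    1 ≤ ∫ x, exp (U x) * p x ∂μ := by
  have key : 0 ≤ ∫ x, (exp (U x) - 1 - U x) * p x ∂μ :=
    integral_nonneg_of_ae <| by
      filter_upwards [hp0] with x hx
      exact mul_nonneg (exp_sub_one_sub_nonneg _) hx
  linarith [integral_exp_sub_one_sub_mul_eq hp1 hUp hUp0 hexp]

lemma integral_exp_mul_eq_one_iff (hppos : ∀ᵐ x ∂μ, 0 < p x)
    (hexp : Integrable (fun x => exp (U x) * p x) μ) :
    ∫ x, exp (U x) * p x ∂μ = 1 ↔ ∀ᵐ x ∂μ, U x = 0 := by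
  have hp := integrable_of_integral_eq_one hp1
  have hnonneg : 0 ≤ᵐ[μ] fun x => (exp (U x) - 1 - U x) * p x := by
    filter_upwards [hppos] with x hx
    exact mul_nonneg (exp_sub_one_sub_nonneg _) hx.le
  have hint : Integrable (fun x => (exp (U x) - 1 - U x) * p x) μ := by
    simp_rw [sub_mul, one_mul]
    exact (hexp.sub hp).sub hUp
  rw [← sub_eq_zero, ← integral_exp_sub_one_sub_mul_eq hp1 hUp hUp0 hexp,
    integral_eq_zero_iff_of_nonneg_ae hnonneg hint]
  refine Filter.eventually_congr ?_
  filter_upwards [hppos] with x hx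
  simp only [Pi.zero_apply, mul_eq_zero, hx.ne', or_false, exp_sub_one_sub_eq_zero_iff]

lemma log_integral_exp_mul_nonneg (hp0 : ∀ᵐ x ∂μ, 0 ≤ p x)
    (hexp : Integrable (fun x => exp (U x) * p x) μ) :
    0 ≤ log (∫ x, exp (U x) * p x ∂μ) :=
  log_nonneg (one_le_integral_exp_mul hp1 hUp hUp0 hp0 hexp)

lemma log_integral_exp_mul_eq_zero_iff (hppos : ∀ᵐ x ∂μ, 0 < p x)
    (hexp : Integrable (fun x => exp (U x) * p x) μ) :
    log (∫ x, exp (U x) * p x ∂μ) = 0 ↔ ∀ᵐ x ∂μ, U x = 0 := by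
  have h1 := one_le_integral_exp_mul hp1 hUp hUp0 (hppos.mono fun _ hx => hx.le) hexp
  rw [← integral_exp_mul_eq_one_iff hp1 hUp hUp0 hppos hexp, log_eq_zero]
  constructor
  · rintro (h | h | h) <;> linarith
  · exact fun h => Or.inr (Or.inl h)

end CumulantGenerating

lemma integral_mul_log_div_exp_mul {p q U : X → ℝ} (K : ℝ)
    (hppos : ∀ᵐ x ∂μ, 0 < p x) (hqpos : ∀ᵐ x ∂μ, 0 < q x) (hq : Integrable q μ)
    (hUq : Integrable (fun x => U x * q x) μ)
    (hKL : Integrable (fun x => q x * log (q x / p x)) μ) :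
    ∫ x, q x * log (q x / (exp (U x - K) * p x)) ∂μ =
      ∫ x, q x * log (q x / p x) ∂μ - ∫ x, U x * q x ∂μ + K * ∫ x, q x ∂μ := by
  have hpointwise : (fun x => q x * log (q x / (exp (U x - K) * p x))) =ᵐ[μ]
      fun x => q x * log (q x / p x) - U x * q x + K * q x := by
    filter_upwards [hppos, hqpos] with x hpx hqx
    rw [log_div hqx.ne' (by positivity), log_mul (exp_ne_zero _) hpx.ne', log_exp,
      log_div hqx.ne' hpx.ne']
    ring
  have hdiff : Integrable (fun x => q x * log (q x / p x) - U x * q x) μ := hKL.sub hUq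
  rw [integral_congr_ae hpointwise, integral_add hdiff (hq.const_mul K),
    integral_sub hKL hUq, integral_const_mul]

end Tilting

theorem reverse_information_projection_general
    {X : Type*} [MeasurableSpace X] (μ : Measure X)
    (p q : X → ℝ) (n : ℕ) (c : Fin n → X → ℝ) (u : Fin n → ℝ)
    (hppos : ∀ᵐ x ∂μ, 0 < p x) (hqpos : ∀ᵐ x ∂μ, 0 < q x)
    (hp1 : ∫ x, p x ∂μ = 1) (hq1 : ∫ x, q x ∂μ = 1)
    (hcp : ∀ j, Integrable (fun x => c j x * p x) μ)
    (hcq : ∀ j, Integrable (fun x => c j x * q x) μ)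
    (hmatch : ∀ j, ∫ x, c j x * q x ∂μ = ∫ x, c j x * p x ∂μ)
    (U : X → ℝ)
    (hU : U = fun x => ∑ j, u j * (c j x - ∫ y, c j y * p y ∂μ))
    (hexp : Integrable (fun x => Real.exp (U x) * p x) μ)
    (K : ℝ) (hK : K = Real.log (∫ x, Real.exp (U x) * p x ∂μ))
    (pbar : X → ℝ) (hpbar : pbar = fun x => Real.exp (U x - K) * p x)
    (h1 : Integrable (fun x => q x * Real.log (q x / p x)) μ) :
    (∫ x, q x * Real.log (q x / pbar x) ∂μ) -
        (∫ x, q x * Real.log (q x / p x) ∂μ) = K ∧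
    0 ≤ K ∧
    (∫ x, q x * Real.log (q x / p x) ∂μ) ≤
      ∫ x, q x * Real.log (q x / pbar x) ∂μ ∧
    ((∫ x, q x * Real.log (q x / pbar x) ∂μ) =
        (∫ x, q x * Real.log (q x / p x) ∂μ) ↔ ∀ᵐ x ∂μ, U x = 0) := by
  set m : Fin n → ℝ := fun j => ∫ y, c j y * p y ∂μ
  have hp := integrable_of_integral_eq_one hp1
  have hq := integrable_of_integral_eq_one hq1
  have hUp : Integrable (fun x => U x * p x) μ := hU ▸ integrable_centered_sum_mul m u hp hcp
  have hUq : Integrable (fun x => U x * q x) μ := hU ▸ integrable_centered_sum_mul m u hq hcq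
  have hUp0 : ∫ x, U x * p x ∂μ = 0 :=
    hU ▸ integral_centered_sum_mul_eq_zero m u hp hcp hp1 fun _ => rfl
  have hUq0 : ∫ x, U x * q x ∂μ = 0 :=
    hU ▸ integral_centered_sum_mul_eq_zero m u hq hcq hq1 hmatch
  have hgap : (∫ x, q x * log (q x / pbar x) ∂μ) - ∫ x, q x * log (q x / p x) ∂μ = K := by
    rw [hpbar, integral_mul_log_div_exp_mul K hppos hqpos hq hUq h1, hUq0, hq1]
    ring
  have hK0 : 0 ≤ K :=
    hK ▸ log_integral_exp_mul_nonneg hp1 hUp hUp0 (hppos.mono fun _ hx => hx.le) hexp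
  refine ⟨hgap, hK0, by linarith, ?_⟩
  rw [← sub_eq_zero, hgap, hK]
  exact log_integral_exp_mul_eq_zero_iff hp1 hUp hUp0 hppos hexp

/-- reverse information projection. If `E_q[c] = E_p[c]` then
`KL(q‖p) ≤ KL(q‖p̄)` for every member `p̄ = e^{U¹ − K_p(U¹)}·p` of the exponential
family with sufficient statistics `c`; the gap is `K_p(U¹) ≥ 0`, vanishing iff
`U¹ = 0` a.e. -/
theorem reverse_information_projection
    {X : Type*} [MeasurableSpace X] (μ : Measure X) [SigmaFinite μ]
    (p q : X → ℝ) (n : ℕ) (c : Fin n → X → ℝ) (u : Fin n → ℝ)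
    (hpm : Measurable p) (hqm : Measurable q) (hcm : ∀ j, Measurable (c j))
    (hppos : ∀ᵐ x ∂μ, 0 < p x) (hqpos : ∀ᵐ x ∂μ, 0 < q x)
    (hp1 : ∫ x, p x ∂μ = 1) (hq1 : ∫ x, q x ∂μ = 1)
    (hcp : ∀ j, Integrable (fun x => c j x * p x) μ)
    (hcq : ∀ j, Integrable (fun x => c j x * q x) μ)
    (hmatch : ∀ j, ∫ x, c j x * q x ∂μ = ∫ x, c j x * p x ∂μ)
    (U : X → ℝ)
    (hU : U = fun x => ∑ j, u j * (c j x - ∫ y, c j y * p y ∂μ))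
    (hexp : Integrable (fun x => Real.exp (U x) * p x) μ)
    (K : ℝ) (hK : K = Real.log (∫ x, Real.exp (U x) * p x ∂μ))
    (pbar : X → ℝ) (hpbar : pbar = fun x => Real.exp (U x - K) * p x)
    (hUq : Integrable (fun x => U x * q x) μ)
    (h1 : Integrable (fun x => q x * Real.log (q x / p x)) μ)
    (h2 : Integrable (fun x => q x * Real.log (q x / pbar x)) μ) :
    (∫ x, q x * Real.log (q x / pbar x) ∂μ) -
        (∫ x, q x * Real.log (q x / p x) ∂μ) = K ∧
    0 ≤ K ∧
    (∫ x, q x * Real.log (q x / p x) ∂μ) ≤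
      ∫ x, q x * Real.log (q x / pbar x) ∂μ ∧
    ((∫ x, q x * Real.log (q x / pbar x) ∂μ) =
        (∫ x, q x * Real.log (q x / p x) ∂μ) ↔ ∀ᵐ x ∂μ, U x = 0) :=
  reverse_information_projection_general μ p q n c u hppos hqpos hp1 hq1 hcp hcq hmatch U hU hexp K
    hK pbar hpbar h1
end

section
/- Let p ∈ ℰ and V_p a subspace of centered p-integrable random variables. If q lies both in the exponential family EF(V_p) = {e^{U − K_p(U)} p : U ∈ V_p} and in the mixture family MF(V_p) = {q : E_q[U] = 0 for all U ∈ V_p}, then q = p. (Proof: write q = e^{U − K_p(U)} p with U ∈ V_p; then KL(q‖p) = E_q[U] − K_p(U) = −K_p(U) ≤ 0, forcing K_p(U) = 0 and hence U = 0.) -/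
open MeasureTheory Real

/-!
Write `q = e^t p` with `t = U - K = log (q / p)`. Since `U` is centred under both `p` and `q`
and both have mass one, `∫ t q = -K = ∫ t p`, i.e. the symmetrised divergence
`∫ (q - p) log (q / p) = ∫ t (e^t - 1) p` vanishes. Its integrand is nonnegative and vanishes
only where `t = 0`, so `t = 0` a.e. and `q = p` a.e.
-/

namespace Real

lemma mul_exp_sub_one_nonneg (t : ℝ) : 0 ≤ t * (exp t - 1) := by
  rcases le_total 0 t with ht | ht
  · exact mul_nonneg ht (by linarith [add_one_le_exp t])
  · exact mul_nonneg_of_nonpos_of_nonpos ht (sub_nonpos.2 (exp_le_one_iff.2 ht))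

lemma mul_exp_sub_one_eq_zero_iff {t : ℝ} : t * (exp t - 1) = 0 ↔ t = 0 := by
  simp [sub_eq_zero]

end Real

section

variable {X : Type*} [MeasurableSpace X] {μ : Measure X}

lemma integrable_sub_const_mul_and_integral_eq {r U : X → ℝ} (K : ℝ)
    (hr : ∫ x, r x ∂μ = 1) (hUr : Integrable (fun x => U x * r x) μ)
    (hU : ∫ x, U x * r x ∂μ = 0) :
    Integrable (fun x => (U x - K) * r x) μ ∧ ∫ x, (U x - K) * r x ∂μ = -K := by
  have hri : Integrable r μ := Integrable.of_integral_ne_zero (by simp [hr])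
  have hsplit : (fun x => (U x - K) * r x) = fun x => U x * r x - K * r x := by
    funext x; ring
  rw [hsplit]
  refine ⟨hUr.sub (hri.const_mul K), ?_⟩
  rw [integral_sub hUr (hri.const_mul K), integral_const_mul, hU, hr]
  ring

lemma ae_eq_zero_of_integral_mul_exp_mul_eq {p t : X → ℝ} (hp : ∀ᵐ x ∂μ, 0 < p x)
    (htp : Integrable (fun x => t x * p x) μ)
    (htq : Integrable (fun x => t x * (exp (t x) * p x)) μ)
    (h : ∫ x, t x * (exp (t x) * p x) ∂μ = ∫ x, t x * p x ∂μ) :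
    t =ᵐ[μ] 0 := by
  set f : X → ℝ := fun x => t x * (exp (t x) - 1) * p x
  have hf : f = fun x => t x * (exp (t x) * p x) - t x * p x := by
    funext x; simp only [f]; ring
  have hf_nonneg : 0 ≤ᵐ[μ] f := by
    filter_upwards [hp] with x hx
    exact mul_nonneg (mul_exp_sub_one_nonneg (t x)) hx.le
  have hf_int : ∫ x, f x ∂μ = 0 := by
    rw [hf, integral_sub htq htp, h, sub_self]
  have hf_zero : f =ᵐ[μ] 0 :=
    (integral_eq_zero_iff_of_nonneg_ae hf_nonneg (hf ▸ htq.sub htp)).1 hf_int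
  filter_upwards [hf_zero, hp] with x hfx hx
  exact mul_exp_sub_one_eq_zero_iff.1 ((mul_eq_zero.1 hfx).resolve_right hx.ne')

end

theorem exponential_mixture_intersection_general
    {X : Type*} [MeasurableSpace X] (μ : Measure X)
    (p q : X → ℝ)
    (hppos : ∀ᵐ x ∂μ, 0 < p x)
    (hp1 : ∫ x, p x ∂μ = 1) (hq1 : ∫ x, q x ∂μ = 1)
    (V : Submodule ℝ (X → ℝ))
    (hVp : ∀ W ∈ V, Integrable (fun x => W x * p x) μ ∧ ∫ x, W x * p x ∂μ = 0)
    (U : X → ℝ) (hUV : U ∈ V)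
    (K : ℝ)
    (hq : q = fun x => Real.exp (U x - K) * p x)
    (hmix : ∀ W ∈ V, Integrable (fun x => W x * q x) μ ∧ ∫ x, W x * q x ∂μ = 0) :
    ∀ᵐ x ∂μ, q x = p x := by
  obtain ⟨htp, htp_int⟩ :=
    integrable_sub_const_mul_and_integral_eq K hp1 (hVp U hUV).1 (hVp U hUV).2
  obtain ⟨htq, htq_int⟩ :=
    integrable_sub_const_mul_and_integral_eq K hq1 (hmix U hUV).1 (hmix U hUV).2
  subst hq
  have ht : (fun x => U x - K) =ᵐ[μ] 0 :=
    ae_eq_zero_of_integral_mul_exp_mul_eq hppos htp htq (htq_int.trans htp_int.symm)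
  filter_upwards [ht] with x hx
  simp [show U x - K = 0 from hx]

/-- the unique intersection of the exponential family `EF(V_p)` and the
mixture family `MF(V_p)` is `p` itself. -/
theorem exponential_mixture_intersection
    {X : Type*} [MeasurableSpace X] (μ : Measure X) [SigmaFinite μ]
    (p q : X → ℝ)
    (hpm : Measurable p) (hqm : Measurable q)
    (hppos : ∀ᵐ x ∂μ, 0 < p x) (hqpos : ∀ᵐ x ∂μ, 0 < q x)
    (hp1 : ∫ x, p x ∂μ = 1) (hq1 : ∫ x, q x ∂μ = 1)
    (V : Submodule ℝ (X → ℝ))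
    (hVp : ∀ W ∈ V, Integrable (fun x => W x * p x) μ ∧ ∫ x, W x * p x ∂μ = 0)
    (U : X → ℝ) (hUV : U ∈ V)
    (hexp : Integrable (fun x => Real.exp (U x) * p x) μ)
    (K : ℝ) (hK : K = Real.log (∫ x, Real.exp (U x) * p x ∂μ))
    (hq : q = fun x => Real.exp (U x - K) * p x)
    (hmix : ∀ W ∈ V, Integrable (fun x => W x * q x) μ ∧ ∫ x, W x * q x ∂μ = 0) :
    ∀ᵐ x ∂μ, q x = p x :=
  exponential_mixture_intersection_general μ p q hppos hp1 hq1 V hVp U hUV K hq hmix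
end
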